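/- Let v₁ be a vertex labeled EnterCtx(i) for some i, let v₂, v_e be vertices with a_node(v₂) ≠ LeaveCtx and a_node(v_e) ≠ LeaveCtx, and let w₀, w₂, w₃, w₄ be paths such that v₂·w₂, v₂·w₃, and v₂·w₄·v_e are balanced path prefixes containing no vertex labeled CopyAttr or PropagateAttrs. Then for every production context stack C ∈ 𝒞, f_pErr(w₀·v₁·v₂·w₂·v₁·v₂·w₃·v₁·v₂·w₄·v_e, C) = f_pErr(w₀·v₁·v₂·w₃·v₁·v₂·w₄·v_e, C); i.e., deleting the segment v₂·w₂·v₁ between the first two traversals of v₁ does not change the set of violations detected at the final node v_e. -/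

import Mathlib

/-!
Common model: Neverlang semantic-action verification (nlgcheck).

A production context is a pair `(k, m)` with `k ∈ ℕ` and `m : ℕ × I ⇀ T` a
partial attribute map (modeled as `ℕ × I → Option T`).  A production context
stack is a *nonempty* list `c₀ … c_n` of production contexts (with `c_n` the
top); it is modeled as the pair of its top element `c_n` and the list of the
remaining elements `[c_{n-1}, …, c₀]` (top-first order).
-/

/-- Attribute maps: partial maps from (position, attribute name) to types. -/
abbrev AttrMap (I T : Type) := ℕ × I → Option T

/-- A production context: a position `k` together with an attribute map `m`. -/
abbrev ProdCtx (I T : Type) := ℕ × AttrMap I T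

/-- A nonempty production context stack: the top context `c_n` together with
the list `[c_{n-1}, …, c₀]` of the contexts below it. -/
abbrev Stk (I T : Type) := ProdCtx I T × List (ProdCtx I T)

/-- CFG node actions. -/
inductive Act (I T : Type) : Type where
  | writeAttr (i : ℕ) (η : I) (t : T)
  | readAttr (i : ℕ) (η : I) (t : T)
  | copyAttr (iDst : ℕ) (ηDst : I) (iSrc : ℕ) (ηSrc : I)
  | checkAttrType (i : ℕ) (η : I) (t : T)
  | propagateAttrs
  | beginEvalMetaAction (i : ℕ)
  | endEvalMetaAction
  | enterCtx (i : ℕ)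
  | leaveCtx
  | nop
  | ignoreBranchAction

/-- Violations. -/
inductive Viol (I T : Type) : Type where
  | missingAttr (i : ℕ) (η : I)
  | badAttrT (i : ℕ) (η : I) (tReq : T) (tProv : T)
  | attrTypeDynamicallyChecked (i : ℕ) (η : I) (t : T)

set_option linter.unusedSectionVars false
variable {I T : Type} [DecidableEq I]

/-- Update an attribute map at key `(i, η)` with value `t`. -/
def updMap (m : AttrMap I T) (i : ℕ) (η : I) (t : T) : AttrMap I T :=
  fun p => if p = (i, η) then some t else m p

/-- `get(C, i, η)` is `m_n(i, η)` when `i ≥ 1` or `C = c₀`, and is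
`m_{n-1}(k_n, η)` when `i = 0` and `n ≥ 1`. -/
def getA : Stk I T → ℕ → I → Option T
  | (c, []), i, η => c.2 (i, η)
  | (c, c' :: _), i, η => if i = 0 then c'.2 (c.1, η) else c.2 (i, η)

/-- `put(C, i, η, t)` updates `m_n` with `(i, η) ↦ t` when `i ≥ 1` or `C = c₀`,
and updates `m_{n-1}` with `(k_n, η) ↦ t` when `i = 0` and `n ≥ 1`. -/
def putA : Stk I T → ℕ → I → T → Stk I T
  | (c, []), i, η, t => ((c.1, updMap c.2 i η t), [])
  | (c, c' :: rest), i, η, t =>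
      if i = 0 then (c, (c'.1, updMap c'.2 c.1 η t) :: rest)
      else ((c.1, updMap c.2 i η t), c' :: rest)

/-- Push a production context onto the stack. -/
def pushA (C : Stk I T) (c : ProdCtx I T) : Stk I T := (c, C.1 :: C.2)

/-- Pop the top production context off the stack (identity on a singleton
stack, which never occurs in well-formed executions). -/
def popA : Stk I T → Stk I T
  | (c, []) => (c, [])
  | (_, c' :: rest) => (c', rest)

/-- `getAll(C, i)`: all the name/type attribute pairs at position `i` of the
current node, as a partial map from names to types. -/
def getAllA (C : Stk I T) (i : ℕ) : I → Option T := fun η => getA C i η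

/-- `merge(m, X, j)`: add every pair of `X` at position `j` into `m` without
overwriting existing keys. -/
def mergeMap (m : AttrMap I T) (j : ℕ) (X : I → Option T) : AttrMap I T :=
  fun p =>
    if p.1 = j then
      match m p with
      | some t => some t
      | none => X p.2
    else m p

/-- `putAll(C, i, X)`: add each pair of `X` at position `i` (resp. at `k_n` in
`m_{n-1}` when `i = 0` and `n ≥ 1`), without overwriting existing keys. -/
def putAllA : Stk I T → ℕ → (I → Option T) → Stk I T
  | (c, []), i, X => ((c.1, mergeMap c.2 i X), [])
  | (c, c' :: rest), i, X =>
      if i = 0 then (c, (c'.1, mergeMap c'.2 c.1 X) :: rest)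
      else ((c.1, mergeMap c.2 i X), c' :: rest)

/-- The head of a production context stack:
`head(C) = m₀` if `C = c₀`, and
`head(C) = m_n ∪ {(0, η) ↦ t : m_{n-1}(k_n, η) = t}` if `n ≥ 1`
(the entries at position `0` come from `m_{n-1}` at key `(k_n, ·)`; the entries
at positions `i ≥ 1` come from `m_n`). -/
def headC : Stk I T → AttrMap I T
  | (c, []) => c.2
  | (c, c' :: _) => fun p => if p.1 = 0 then c'.2 (c.1, p.2) else c.2 p

/-- A production context with empty attribute map, at position `i`. -/
def emptyCtx (i : ℕ) : ProdCtx I T := (i, fun _ => none)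

/-- `f_aCtx`: the context-transformation component of the action semantics
`f_action`. -/
def fACtx (C : Stk I T) : Act I T → Stk I T
  | .writeAttr i η t => putA C i η t
  | .copyAttr iDst ηDst iSrc ηSrc =>
      match getA C iSrc ηSrc with
      | none => C
      | some t => putA C iDst ηDst t
  | .propagateAttrs => putAllA C 0 (getAllA C 1)
  | .enterCtx i => pushA C (emptyCtx i)
  | .leaveCtx => popA C
  | _ => C

/-- `f_aErr`: the violation component of the action semantics `f_action`,
relative to a (decidable) subtyping relation `sub`. -/
def fAErr (sub : T → T → Prop) [DecidableRel sub] (C : Stk I T) :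
    Act I T → Set (Viol I T)
  | .readAttr i η t =>
      match getA C i η with
      | none => {Viol.missingAttr i η}
      | some tp => if sub tp t then ∅ else {Viol.badAttrT i η t tp}
  | .copyAttr _ _ iSrc ηSrc =>
      match getA C iSrc ηSrc with
      | none => {Viol.missingAttr iSrc ηSrc}
      | some _ => ∅
  | .checkAttrType i η t => {Viol.attrTypeDynamicallyChecked i η t}
  | _ => ∅

/-- `f_action`: maps a production context stack and an action to a new
production context stack and a set of violations. -/
def fAction (sub : T → T → Prop) [DecidableRel sub] (C : Stk I T)
    (a : Act I T) : Stk I T × Set (Viol I T) :=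
  (fACtx C a, fAErr sub C a)

variable {V : Type}

/-- `f_pCtx`: overall change to the production context stack along a path
(a list of CFG vertices), given the labeling `a_node`. -/
def fPCtx (aNode : V → Act I T) : List V → Stk I T → Stk I T
  | [], C => C
  | v :: w', C => fPCtx aNode w' (fACtx C (aNode v))

/-- `f_pErr`: the set of violations detected at the last node of a path:
`f_pErr(ε, C) = ∅` and `f_pErr(w'·v, C) = f_aErr(f_pCtx(w', C), a_node(v))`. -/
def fPErr (sub : T → T → Prop) [DecidableRel sub] (aNode : V → Act I T)
    (w : List V) (C : Stk I T) : Set (Viol I T) :=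
  match w.getLast? with
  | none => ∅
  | some v => fAErr sub (fPCtx aNode w.dropLast C) (aNode v)

/-- `A_pb`: prefixes of balanced action sequences. -/
inductive IsBalPrefix : List (Act I T) → Prop where
  | nil : IsBalPrefix []
  | cons {b : List (Act I T)} (a : Act I T) (hb : IsBalPrefix b)
      (ha : a ≠ .leaveCtx) : IsBalPrefix (a :: b)
  | snoc {b : List (Act I T)} (a : Act I T) (hb : IsBalPrefix b)
      (ha : a ≠ .leaveCtx) : IsBalPrefix (b ++ [a])
  | wrap {b : List (Act I T)} (i : ℕ) (hb : IsBalPrefix b) :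
      IsBalPrefix (.enterCtx i :: (b ++ [.leaveCtx]))

/-- An action is neither a `CopyAttr` nor a `PropagateAttrs`. -/
def NotCopyProp (a : Act I T) : Prop :=
  (∀ iDst ηDst iSrc ηSrc, a ≠ .copyAttr iDst ηDst iSrc ηSrc) ∧
    a ≠ .propagateAttrs

/-- `top_k(c₀ … c_n)`: the `k` topmost items of the stack (topmost first). -/
def topk (k : ℕ) (C : Stk I T) : List (ProdCtx I T) := (C.1 :: C.2).take k

/-! ### Auxiliary development -/

/-- Action-list version of `fPCtx`. -/
def fCtxA : List (Act I T) → Stk I T → Stk I T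
  | [], C => C
  | a :: as, C => fCtxA as (fACtx C a)

lemma fCtxA_append (as bs : List (Act I T)) (C : Stk I T) :
    fCtxA (as ++ bs) C = fCtxA bs (fCtxA as C) := by
  induction as generalizing C with
  | nil => rfl
  | cons a as ih => simp [fCtxA, ih]

lemma fPCtx_eq_fCtxA {V : Type} (aNode : V → Act I T) (w : List V) (C : Stk I T) :
    fPCtx aNode w C = fCtxA (w.map aNode) C := by
  induction w generalizing C with
  | nil => rfl
  | cons v w ih => simp [fPCtx, fCtxA, ih]

lemma fPCtx_append {V : Type} (aNode : V → Act I T) (u w : List V) (C : Stk I T) :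
    fPCtx aNode (u ++ w) C = fPCtx aNode w (fPCtx aNode u C) := by
  induction u generalizing C with
  | nil => rfl
  | cons v u ih => simp [fPCtx, ih]

/-- Prepend a (possibly empty) list of extra contexts on top of a stack. -/
def mkStk : List (ProdCtx I T) → Stk I T → Stk I T
  | [], S => S
  | h :: t, S => (h, t ++ S.1 :: S.2)

lemma mkStk_append (L L' : List (ProdCtx I T)) (S : Stk I T) :
    mkStk (L ++ L') S = mkStk L (mkStk L' S) := by
  cases L with
  | nil => rfl
  | cons h t => cases L' with
    | nil => simp [mkStk]
    | cons h' t' => simp [mkStk]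

lemma pushA_mkStk (L : List (ProdCtx I T)) (S : Stk I T) (c : ProdCtx I T) :
    pushA (mkStk L S) c = (c, L ++ S.1 :: S.2) := by
  cases L <;> simp [mkStk, pushA]

lemma popA_mkStk (z : ProdCtx I T) (L : List (ProdCtx I T)) (S : Stk I T) :
    popA (mkStk (z :: L) S) = mkStk L S := by
  cases L <;> simp [mkStk, popA]

lemma mkStk_fst (L : List (ProdCtx I T)) (S : Stk I T) :
    (mkStk L S).1 = L.headD S.1 := by
  cases L <;> simp [mkStk]

lemma getA_mkStk_indep (L : List (ProdCtx I T)) (c' y : ProdCtx I T)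
    (R R' : List (ProdCtx I T)) (j : ℕ) (η : I) :
    getA (mkStk L (c', y :: R)) j η = getA (mkStk L (c', y :: R')) j η := by
  cases L with
  | nil => simp [mkStk, getA]
  | cons h t => cases t <;> simp [mkStk, getA]

lemma fAErr_ext (sub : T → T → Prop) [DecidableRel sub] (S S' : Stk I T)
    (h : ∀ j η, getA S j η = getA S' j η) (a : Act I T) :
    fAErr sub S a = fAErr sub S' a := by
  cases a <;> first
    | rfl
    | (simp only [fAErr]; rw [h])

lemma IsBalPrefix.of_prefix {l : List (Act I T)} (h : IsBalPrefix l) :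
    ∀ p, p <+: l → IsBalPrefix p := by
  induction h with
  | nil =>
      intro p hp
      rw [List.prefix_nil.mp hp]; exact .nil
  | cons a hb ha ih =>
      intro p hp
      rcases List.prefix_cons_iff.mp hp with rfl | ⟨t, rfl, ht⟩
      · exact .nil
      · exact .cons a (ih t ht) ha
  | @snoc b a hb ha ih =>
      intro p hp
      rcases List.prefix_concat_iff.mp hp with rfl | hp
      · exact .snoc a hb ha
      · exact ih p hp
  | wrap j hb ih =>
      intro p hp
      rcases List.prefix_cons_iff.mp hp with rfl | ⟨t, rfl, ht⟩
      · exact .nil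
      · rcases List.prefix_concat_iff.mp ht with rfl | ht
        · exact .wrap j hb
        · exact .cons _ (ih t ht) (by intro h; cases h)

/-- Structure lemma: a balanced action-sequence prefix with no `CopyAttr`
and no `PropagateAttrs` transforms a stack with at least two elements in a
uniform way: some new contexts `L` on top, an update `u` to the top map, an
update `bu` (depending on the top position) to the map just below, and the
rest untouched. -/
lemma bal_struct {as : List (Act I T)} (hb : IsBalPrefix as) :
    (∀ a ∈ as, NotCopyProp a) →
    ∃ (L : List (ProdCtx I T)) (u : AttrMap I T → AttrMap I T)
      (bu : ℕ → AttrMap I T → AttrMap I T),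
      ∀ (c x : ProdCtx I T) (xs : List (ProdCtx I T)),
        fCtxA as (c, x :: xs) =
          mkStk L ((c.1, u c.2), (x.1, bu c.1 x.2) :: xs) := by
  induction hb with
  | nil =>
      intro _
      exact ⟨[], id, fun _ m => m, fun c x xs => by simp [fCtxA, mkStk]⟩
  | @cons b a hb ha ih =>
      intro hn
      obtain ⟨L, u, bu, H⟩ := ih fun a' h => hn a' (List.mem_cons_of_mem _ h)
      have hcp : NotCopyProp a := hn a (List.mem_cons_self (a := a))
      cases a with
      | writeAttr j η t =>
          by_cases hj : j = 0
          · subst hj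
            exact ⟨L, u, fun k m => bu k (updMap m k η t), fun c x xs => by
              simpa [fCtxA, fACtx, putA] using H c (x.1, updMap x.2 c.1 η t) xs⟩
          · exact ⟨L, fun m => u (updMap m j η t), bu, fun c x xs => by
              simpa [fCtxA, fACtx, putA, hj] using H (c.1, updMap c.2 j η t) x xs⟩
      | enterCtx j =>
          refine ⟨L ++ [(j, u (fun _ => none))], bu j, fun _ m => m,
            fun c x xs => ?_⟩
          have h1 : fCtxA (Act.enterCtx j :: b) (c, x :: xs) =
              mkStk L ((j, u fun _ => none), (c.1, bu j c.2) :: x :: xs) := by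
            simpa [fCtxA, fACtx, pushA, emptyCtx] using
              H (j, fun _ => none) c (x :: xs)
          rw [h1, mkStk_append]
          simp [mkStk]
      | readAttr j η t => exact ⟨L, u, bu, fun c x xs => H c x xs⟩
      | checkAttrType j η t => exact ⟨L, u, bu, fun c x xs => H c x xs⟩
      | beginEvalMetaAction j => exact ⟨L, u, bu, fun c x xs => H c x xs⟩
      | endEvalMetaAction => exact ⟨L, u, bu, fun c x xs => H c x xs⟩
      | nop => exact ⟨L, u, bu, fun c x xs => H c x xs⟩
      | ignoreBranchAction => exact ⟨L, u, bu, fun c x xs => H c x xs⟩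
      | leaveCtx => exact absurd rfl ha
      | copyAttr a b c d => exact absurd rfl (hcp.1 a b c d)
      | propagateAttrs => exact absurd rfl hcp.2
  | @snoc b a hb ha ih =>
      intro hn
      obtain ⟨L, u, bu, H⟩ := ih fun a' h => hn a' (by simp [h])
      have hcp : NotCopyProp a := hn a (by simp)
      cases a with
      | writeAttr j η t =>
          by_cases hj : j = 0
          · subst hj
            cases L with
            | nil =>
                exact ⟨[], u, fun k m => updMap (bu k m) k η t, fun c x xs => by
                  rw [fCtxA_append, H]
                  simp [fCtxA, fACtx, mkStk, putA]⟩
            | cons l tl =>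
                cases tl with
                | nil =>
                    exact ⟨[l], fun m => updMap (u m) l.1 η t, bu,
                      fun c x xs => by
                        rw [fCtxA_append, H]
                        simp [fCtxA, fACtx, mkStk, putA]⟩
                | cons q tl' =>
                    exact ⟨l :: (q.1, updMap q.2 l.1 η t) :: tl', u, bu,
                      fun c x xs => by
                        rw [fCtxA_append, H]
                        cases tl' <;> simp [fCtxA, fACtx, mkStk, putA]⟩
          · cases L with
            | nil =>
                exact ⟨[], fun m => updMap (u m) j η t, bu, fun c x xs => by
                  rw [fCtxA_append, H]
                  simp [fCtxA, fACtx, mkStk, putA, hj]⟩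
            | cons l tl =>
                exact ⟨(l.1, updMap l.2 j η t) :: tl, u, bu, fun c x xs => by
                  rw [fCtxA_append, H]
                  cases tl <;> simp [fCtxA, fACtx, mkStk, putA, hj]⟩
      | enterCtx j =>
          exact ⟨(j, fun _ => none) :: L, u, bu, fun c x xs => by
            rw [fCtxA_append, H]
            show pushA _ _ = _
            rw [pushA_mkStk]
            simp [mkStk, emptyCtx]⟩
      | readAttr j η t => exact ⟨L, u, bu, fun c x xs => by
          rw [fCtxA_append, H]; rfl⟩
      | checkAttrType j η t => exact ⟨L, u, bu, fun c x xs => by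
          rw [fCtxA_append, H]; rfl⟩
      | beginEvalMetaAction j => exact ⟨L, u, bu, fun c x xs => by
          rw [fCtxA_append, H]; rfl⟩
      | endEvalMetaAction => exact ⟨L, u, bu, fun c x xs => by
          rw [fCtxA_append, H]; rfl⟩
      | nop => exact ⟨L, u, bu, fun c x xs => by
          rw [fCtxA_append, H]; rfl⟩
      | ignoreBranchAction => exact ⟨L, u, bu, fun c x xs => by
          rw [fCtxA_append, H]; rfl⟩
      | leaveCtx => exact absurd rfl ha
      | copyAttr a b c d => exact absurd rfl (hcp.1 a b c d)
      | propagateAttrs => exact absurd rfl hcp.2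
  | @wrap b j hb ih =>
      intro hn
      obtain ⟨L, u, bu, H⟩ := ih fun a' h => hn a' (by simp [h])
      have key : ∀ (c x : ProdCtx I T) (xs : List (ProdCtx I T)),
          fCtxA (Act.enterCtx j :: (b ++ [Act.leaveCtx])) (c, x :: xs) =
            popA (mkStk L ((j, u fun _ => none), (c.1, bu j c.2) :: x :: xs)) := by
        intro c x xs
        have h0 : fCtxA (Act.enterCtx j :: (b ++ [Act.leaveCtx])) (c, x :: xs) =
            fCtxA (b ++ [Act.leaveCtx]) ((j, fun _ => none), c :: x :: xs) := by
          simp [fCtxA, fACtx, pushA, emptyCtx]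
        rw [h0, fCtxA_append]
        have h1 : fCtxA b ((j, fun _ => none), c :: x :: xs) =
            mkStk L ((j, u fun _ => none), (c.1, bu j c.2) :: x :: xs) := by
          simpa using H (j, fun _ => none) c (x :: xs)
        rw [h1]
        rfl
      cases L with
      | nil =>
          refine ⟨[], bu j, fun _ m => m, fun c x xs => ?_⟩
          rw [key c x xs]
          simp [mkStk, popA]
      | cons l tl =>
          refine ⟨tl ++ [(j, u fun _ => none)], bu j, fun _ m => m,
            fun c x xs => ?_⟩
          rw [key c x xs, popA_mkStk, mkStk_append]
          simp [mkStk]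

lemma fPErr_concat {V : Type} (sub : T → T → Prop) [DecidableRel sub]
    (aNode : V → Act I T) (w : List V) (v : V) (C : Stk I T) :
    fPErr sub aNode (w ++ [v]) C = fAErr sub (fPCtx aNode w C) (aNode v) := by
  simp [fPErr, List.getLast?_concat, List.dropLast_concat]

/-- let `v₁` be a vertex labeled `EnterCtx(i)` for some `i`,
let `v₂, v_e` be vertices with `a_node(v₂) ≠ LeaveCtx` and
`a_node(v_e) ≠ LeaveCtx`, and let `w₀, w₂, w₃, w₄` be paths such that `v₂·w₂`,
`v₂·w₃`, and `v₂·w₄·v_e` are balanced path prefixes containing no vertex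
labeled `CopyAttr` or `PropagateAttrs`.  Then for every production context
stack `C ∈ 𝒞`,
`f_pErr(w₀·v₁·v₂·w₂·v₁·v₂·w₃·v₁·v₂·w₄·v_e, C) = f_pErr(w₀·v₁·v₂·w₃·v₁·v₂·w₄·v_e, C)`:
deleting the segment `v₂·w₂·v₁` between the first two traversals of `v₁` does
not change the set of violations detected at the final node `v_e`. -/
theorem fPErr_drop_repeated_segment (sub : T → T → Prop) [DecidableRel sub]
    (hsubRefl : ∀ t : T, sub t t)
    (aNode : V → Act I T) (v₁ v₂ vₑ : V) (i : ℕ)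
    (hv₁ : aNode v₁ = Act.enterCtx i)
    (hv₂ : aNode v₂ ≠ Act.leaveCtx) (hvₑ : aNode vₑ ≠ Act.leaveCtx)
    (w₀ w₂ w₃ w₄ : List V)
    (hbal₂ : IsBalPrefix ((v₂ :: w₂).map aNode))
    (hbal₃ : IsBalPrefix ((v₂ :: w₃).map aNode))
    (hbal₄ : IsBalPrefix ((v₂ :: (w₄ ++ [vₑ])).map aNode))
    (hncp₂ : ∀ v ∈ v₂ :: w₂, NotCopyProp (aNode v))
    (hncp₃ : ∀ v ∈ v₂ :: w₃, NotCopyProp (aNode v))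
    (hncp₄ : ∀ v ∈ v₂ :: (w₄ ++ [vₑ]), NotCopyProp (aNode v))
    (C : Stk I T) :
    fPErr sub aNode
        (w₀ ++ v₁ :: v₂ :: (w₂ ++ v₁ :: v₂ :: (w₃ ++ v₁ :: v₂ :: (w₄ ++ [vₑ]))))
        C =
      fPErr sub aNode
        (w₀ ++ v₁ :: v₂ :: (w₃ ++ v₁ :: v₂ :: (w₄ ++ [vₑ]))) C := by
  classical
  -- vertex-level version of the structure lemma
  have balV : ∀ (w : List V), IsBalPrefix (w.map aNode) →
      (∀ v ∈ w, NotCopyProp (aNode v)) →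
      ∃ (L : List (ProdCtx I T)) (u : AttrMap I T → AttrMap I T)
        (bu : ℕ → AttrMap I T → AttrMap I T),
        ∀ (c x : ProdCtx I T) (xs : List (ProdCtx I T)),
          fPCtx aNode w (c, x :: xs) =
            mkStk L ((c.1, u c.2), (x.1, bu c.1 x.2) :: xs) := by
    intro w hbw hnw
    obtain ⟨L, u, bu, H⟩ := bal_struct hbw (by
      intro a ha
      obtain ⟨v, hv, rfl⟩ := List.mem_map.mp ha
      exact hnw v hv)
    exact ⟨L, u, bu, fun c x xs => by rw [fPCtx_eq_fCtxA]; exact H c x xs⟩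
  have hbal₄' : IsBalPrefix ((v₂ :: w₄).map aNode) := by
    apply hbal₄.of_prefix
    exact (List.cons_prefix_cons.mpr ⟨rfl, List.prefix_append _ _⟩).map aNode
  have hncp₄' : ∀ v ∈ v₂ :: w₄, NotCopyProp (aNode v) := by
    intro v hv
    apply hncp₄
    rcases List.mem_cons.mp hv with rfl | hv
    · exact List.mem_cons_self
    · exact List.mem_cons_of_mem _ (List.mem_append_left _ hv)
  obtain ⟨L₂, u₂, b₂, H₂⟩ := balV (v₂ :: w₂) hbal₂ hncp₂
  obtain ⟨L₃, u₃, b₃, H₃⟩ := balV (v₂ :: w₃) hbal₃ hncp₃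
  obtain ⟨L₄, u₄, b₄, H₄⟩ := balV (v₂ :: w₄) hbal₄' hncp₄'
  -- composite effect of `v₁` followed by a balanced segment
  have step : ∀ (w : List V) (L : List (ProdCtx I T))
      (u : AttrMap I T → AttrMap I T) (bu : ℕ → AttrMap I T → AttrMap I T),
      (∀ (c x : ProdCtx I T) (xs : List (ProdCtx I T)),
        fPCtx aNode w (c, x :: xs) =
          mkStk L ((c.1, u c.2), (x.1, bu c.1 x.2) :: xs)) →
      ∀ S : Stk I T, fPCtx aNode (v₁ :: w) S =
        mkStk L ((i, u (fun _ => none)), (S.1.1, bu i S.1.2) :: S.2) := by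
    intro w L u bu H S
    have h0 : fACtx S (aNode v₁) = ((i, fun _ => none), S.1 :: S.2) := by
      rw [hv₁]; rfl
    show fPCtx aNode w (fACtx S (aNode v₁)) = _
    rw [h0]
    exact H (i, fun _ => none) S.1 S.2
  -- reshape both paths as `prefix ++ [vₑ]` with the prefix cut into segments
  have h1 : w₀ ++ v₁ :: v₂ :: (w₂ ++ v₁ :: v₂ :: (w₃ ++ v₁ :: v₂ :: (w₄ ++ [vₑ]))) =
      ((((w₀ ++ (v₁ :: v₂ :: w₂)) ++ (v₁ :: v₂ :: w₃)) ++ (v₁ :: v₂ :: w₄)) ++ [vₑ]) := by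
    simp
  have h2 : w₀ ++ v₁ :: v₂ :: (w₃ ++ v₁ :: v₂ :: (w₄ ++ [vₑ])) =
      (((w₀ ++ (v₁ :: v₂ :: w₃)) ++ (v₁ :: v₂ :: w₄)) ++ [vₑ]) := by
    simp
  rw [h1, h2, fPErr_concat, fPErr_concat]
  simp only [fPCtx_append]
  rw [step (v₂ :: w₂) L₂ u₂ b₂ H₂ (fPCtx aNode w₀ C)]
  rw [step (v₂ :: w₃) L₃ u₃ b₃ H₃, step (v₂ :: w₃) L₃ u₃ b₃ H₃]
  rw [step (v₂ :: w₄) L₄ u₄ b₄ H₄, step (v₂ :: w₄) L₄ u₄ b₄ H₄]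
  apply fAErr_ext
  intro j η
  have hf : ∀ (r : List (ProdCtx I T)),
      (mkStk L₃ ((i, u₃ fun _ => none), r)).1 =
        L₃.headD (i, u₃ fun _ => none) := fun r => mkStk_fst _ _
  rw [hf, hf]
  exact getA_mkStk_indep _ _ _ _ _ _ _
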